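/- The windows-scheduling instance with m_c = 2 channels and window sizes (α_1,…,α_7) = (2,3,3,4,5,5,10) admits a feasible schedule, while the pinwheel instance (4,6,6,8,10,10,20) admits no feasible pinwheel schedule; consequently this windows-scheduling instance admits a feasible schedule but no perfect schedule. -/
import Mathlib


/-- A windows schedule `W` over `m` channels is feasible for the window sizes `α`
if every symbol `i` occurs in one of the tuples in every window of `α i`
consecutive time slots. -/
def WSPFeasible {q m : ℕ} (α : Fin q → ℕ) (W : ℕ → Fin m → Fin q) : Prop :=
  ∀ i : Fin q, ∀ t : ℕ, ∃ t' k, t ≤ t' ∧ t' < t + α i ∧ W t' k = i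

/-- A windows schedule is perfect if no symbol migrates between channels. -/
def WSPPerfect {q m : ℕ} (W : ℕ → Fin m → Fin q) : Prop :=
  ∀ (j k : Fin m) (t₁ t₂ : ℕ), W t₁ j = W t₂ k → j = k

/-- A pinwheel schedule `c` is feasible for the instance `β` if every symbol `i`
occurs in every window of `β i` consecutive time slots. -/
def PinFeasible {q : ℕ} (β : Fin q → ℕ) (c : ℕ → Fin q) : Prop :=
  ∀ i : Fin q, ∀ t : ℕ, ∃ t', t ≤ t' ∧ t' < t + β i ∧ c t' = i

namespace Stmt17Aux

/-! ### Part 1: an explicit feasible windows schedule -/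

def w0 : List (Fin 7) := [0, 2, 0, 1, 0, 1, 0, 2, 0, 3, 0, 1, 0, 2, 0, 2, 0, 1, 0, 3]
def w1 : List (Fin 7) := [1, 4, 5, 3, 2, 3, 4, 5, 1, 6, 2, 4, 5, 3, 1, 3, 4, 5, 2, 6]

def Wgood : ℕ → Fin 2 → Fin 7 := fun t j => (if j = 0 then w0 else w1).getD (t % 20) 0

lemma Wgood_feasible : WSPFeasible (![2, 3, 3, 4, 5, 5, 10] : Fin 7 → ℕ) Wgood := by
  have core : ∀ (i : Fin 7) (r : Fin 20), ∃ s : Fin 40, ∃ k : Fin 2,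
      (r : ℕ) ≤ s ∧ (s : ℕ) < (r : ℕ) + (![2, 3, 3, 4, 5, 5, 10] : Fin 7 → ℕ) i ∧
      Wgood s k = i := by decide
  intro i t
  obtain ⟨s, k, h1, h2, h3⟩ := core i ⟨t % 20, Nat.mod_lt _ (by norm_num)⟩
  have h1' : t % 20 ≤ (s : ℕ) := h1
  have h2' : (s : ℕ) < t % 20 + (![2, 3, 3, 4, 5, 5, 10] : Fin 7 → ℕ) i := h2
  have hdm := Nat.div_add_mod t 20
  refine ⟨(s : ℕ) + 20 * (t / 20), k, by omega, by omega, ?_⟩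
  rw [← h3]
  simp [Wgood, Nat.add_mul_mod_self_left]

/-! ### Part 2: infeasibility of the pinwheel instance (4,6,6,8,10,10,20) -/

def surv : ℕ → ℕ → ℕ → ℕ → ℕ → ℕ → ℕ → ℕ → Bool
  | 0, _, _, _, _, _, _, _ => true
  | n+1, a, b, c, d, e, f, g =>
    (decide (b+1 < 6) && decide (c+1 < 6) && decide (d+1 < 8) && decide (e+1 < 10) && decide (f+1 < 10) && decide (g+1 < 20) && surv n 0 (b+1) (c+1) (d+1) (e+1) (f+1) (g+1)) ||
    (decide (a+1 < 4) && decide (c+1 < 6) && decide (d+1 < 8) && decide (e+1 < 10) && decide (f+1 < 10) && decide (g+1 < 20) && surv n (a+1) 0 (c+1) (d+1) (e+1) (f+1) (g+1)) ||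
    (decide (a+1 < 4) && decide (b+1 < 6) && decide (d+1 < 8) && decide (e+1 < 10) && decide (f+1 < 10) && decide (g+1 < 20) && surv n (a+1) (b+1) 0 (d+1) (e+1) (f+1) (g+1)) ||
    (decide (a+1 < 4) && decide (b+1 < 6) && decide (c+1 < 6) && decide (e+1 < 10) && decide (f+1 < 10) && decide (g+1 < 20) && surv n (a+1) (b+1) (c+1) 0 (e+1) (f+1) (g+1)) ||
    (decide (a+1 < 4) && decide (b+1 < 6) && decide (c+1 < 6) && decide (d+1 < 8) && decide (f+1 < 10) && decide (g+1 < 20) && surv n (a+1) (b+1) (c+1) (d+1) 0 (f+1) (g+1)) ||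
    (decide (a+1 < 4) && decide (b+1 < 6) && decide (c+1 < 6) && decide (d+1 < 8) && decide (e+1 < 10) && decide (g+1 < 20) && surv n (a+1) (b+1) (c+1) (d+1) (e+1) 0 (g+1)) ||
    (decide (a+1 < 4) && decide (b+1 < 6) && decide (c+1 < 6) && decide (d+1 < 8) && decide (e+1 < 10) && decide (f+1 < 10) && surv n (a+1) (b+1) (c+1) (d+1) (e+1) (f+1) 0)

def check : Bool :=
  (List.range 4).all fun a => a == 0 ||
  ((List.range 6).all fun b => b == 0 || b == a ||
  ((List.range 6).all fun c => c == 0 || c == a || c == b ||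
  ((List.range 8).all fun d => d == 0 || d == a || d == b || d == c ||
  ((List.range 10).all fun e => e == 0 || e == a || e == b || e == c || e == d ||
  ((List.range 10).all fun f => f == 0 || f == a || f == b || f == c || f == d || f == e ||
   !(surv 24 a b c d e f 0))))))

lemma check_eq : check = true := by decide

lemma surv_false : ∀ a b c d e f : ℕ, a < 4 → b < 6 → c < 6 → d < 8 → e < 10 → f < 10 →
    0 < a → 0 < b → 0 < c → 0 < d → 0 < e → 0 < f →
    a ≠ b → a ≠ c → a ≠ d → a ≠ e → a ≠ f → b ≠ c → b ≠ d → b ≠ e → b ≠ f →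
    c ≠ d → c ≠ e → c ≠ f → d ≠ e → d ≠ f → e ≠ f →
    surv 24 a b c d e f 0 = false := by
  have h := check_eq
  simp only [check, List.all_eq_true, List.mem_range, Bool.or_eq_true, beq_iff_eq,
    Bool.not_eq_true'] at h
  intro a b c d e f ha hb hc hd he hf pa pb pc pd pe pf
  intro h1 h2 h3 h4 h5 h6 h7 h8 h9 h10 h11 h12 h13 h14 h15
  rcases h a ha with h'|h'
  · omega
  rcases h' b hb with (h'|h')|h'
  · omega
  · omega
  rcases h' c hc with ((h'|h')|h')|h'
  · omega
  · omega
  · omega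
  rcases h' d hd with (((h'|h')|h')|h')|h'
  · omega
  · omega
  · omega
  · omega
  rcases h' e he with ((((h'|h')|h')|h')|h')|h'
  · omega
  · omega
  · omega
  · omega
  · omega
  rcases h' f hf with (((((h'|h')|h')|h')|h')|h')|h'
  · omega
  · omega
  · omega
  · omega
  · omega
  · omega
  exact h'

lemma surv_step {n a b c d e f g a' b' c' d' e' f' g' : ℕ}
    (hbnd : a' < 4 ∧ b' < 6 ∧ c' < 6 ∧ d' < 8 ∧ e' < 10 ∧ f' < 10 ∧ g' < 20)
    (h : (a' = 0 ∧ b' = b + 1 ∧ c' = c + 1 ∧ d' = d + 1 ∧ e' = e + 1 ∧ f' = f + 1 ∧ g' = g + 1) ∨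
         (a' = a + 1 ∧ b' = 0 ∧ c' = c + 1 ∧ d' = d + 1 ∧ e' = e + 1 ∧ f' = f + 1 ∧ g' = g + 1) ∨
         (a' = a + 1 ∧ b' = b + 1 ∧ c' = 0 ∧ d' = d + 1 ∧ e' = e + 1 ∧ f' = f + 1 ∧ g' = g + 1) ∨
         (a' = a + 1 ∧ b' = b + 1 ∧ c' = c + 1 ∧ d' = 0 ∧ e' = e + 1 ∧ f' = f + 1 ∧ g' = g + 1) ∨
         (a' = a + 1 ∧ b' = b + 1 ∧ c' = c + 1 ∧ d' = d + 1 ∧ e' = 0 ∧ f' = f + 1 ∧ g' = g + 1) ∨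
         (a' = a + 1 ∧ b' = b + 1 ∧ c' = c + 1 ∧ d' = d + 1 ∧ e' = e + 1 ∧ f' = 0 ∧ g' = g + 1) ∨
         (a' = a + 1 ∧ b' = b + 1 ∧ c' = c + 1 ∧ d' = d + 1 ∧ e' = e + 1 ∧ f' = f + 1 ∧ g' = 0))
    (hs : surv n a' b' c' d' e' f' g' = true) :
    surv (n+1) a b c d e f g = true := by
  obtain ⟨hb1, hb2, hb3, hb4, hb5, hb6, hb7⟩ := hbnd
  rcases h with ⟨h1,h2,h3,h4,h5,h6,h7⟩|⟨h1,h2,h3,h4,h5,h6,h7⟩|⟨h1,h2,h3,h4,h5,h6,h7⟩|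
    ⟨h1,h2,h3,h4,h5,h6,h7⟩|⟨h1,h2,h3,h4,h5,h6,h7⟩|⟨h1,h2,h3,h4,h5,h6,h7⟩|⟨h1,h2,h3,h4,h5,h6,h7⟩ <;>
    subst h1 <;> subst h2 <;> subst h3 <;> subst h4 <;> subst h5 <;> subst h6 <;> subst h7 <;>
    simp [surv, hs, hb1, hb2, hb3, hb4, hb5, hb6, hb7]

/-! The "last occurrence" and "age" of a symbol in a pinwheel schedule. -/

def lastO (cs : ℕ → Fin 7) (i : Fin 7) (T : ℕ) : ℕ :=
  Nat.findGreatest (fun s => cs s = i) T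

def ageO (cs : ℕ → Fin 7) (i : Fin 7) (T : ℕ) : ℕ := T - lastO cs i T

section

variable {cs : ℕ → Fin 7}

lemma hocc (hc : PinFeasible (![4, 6, 6, 8, 10, 10, 20] : Fin 7 → ℕ) cs)
    (i : Fin 7) (T : ℕ) (hT : 19 ≤ T) :
    ∃ s, cs s = i ∧ s ≤ T ∧ T < s + (![4, 6, 6, 8, 10, 10, 20] : Fin 7 → ℕ) i := by
  obtain ⟨s, h1, h2, h3⟩ := hc i (T + 1 - (![4, 6, 6, 8, 10, 10, 20] : Fin 7 → ℕ) i)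
  have hb : ∀ j : Fin 7, (![4, 6, 6, 8, 10, 10, 20] : Fin 7 → ℕ) j ≤ 20 ∧
      1 ≤ (![4, 6, 6, 8, 10, 10, 20] : Fin 7 → ℕ) j := by decide
  obtain ⟨hbl, hbu⟩ := hb i
  exact ⟨s, h3, by omega, by omega⟩

lemma lastO_spec (hc : PinFeasible (![4, 6, 6, 8, 10, 10, 20] : Fin 7 → ℕ) cs)
    (i : Fin 7) (T : ℕ) (hT : 19 ≤ T) :
    cs (lastO cs i T) = i ∧ T < lastO cs i T + (![4, 6, 6, 8, 10, 10, 20] : Fin 7 → ℕ) i := by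
  obtain ⟨s, h1, h2, h3⟩ := hocc hc i T hT
  have h4 := Nat.le_findGreatest (P := fun s => cs s = i) h2 h1
  unfold lastO
  exact ⟨Nat.findGreatest_spec (P := fun s => cs s = i) h2 h1, by omega⟩

lemma ageO_lt (hc : PinFeasible (![4, 6, 6, 8, 10, 10, 20] : Fin 7 → ℕ) cs)
    (i : Fin 7) (T : ℕ) (hT : 19 ≤ T) :
    ageO cs i T < (![4, 6, 6, 8, 10, 10, 20] : Fin 7 → ℕ) i := by
  have h := (lastO_spec hc i T hT).2
  have hle : lastO cs i T ≤ T := Nat.findGreatest_le T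
  unfold ageO
  omega

lemma ageO_distinct (hc : PinFeasible (![4, 6, 6, 8, 10, 10, 20] : Fin 7 → ℕ) cs)
    {i j : Fin 7} (T : ℕ) (hT : 19 ≤ T) (hij : i ≠ j) :
    ageO cs i T ≠ ageO cs j T := by
  intro h
  have hi := (lastO_spec hc i T hT).1
  have hj := (lastO_spec hc j T hT).1
  have h1 : lastO cs i T ≤ T := Nat.findGreatest_le T
  have h2 : lastO cs j T ≤ T := Nat.findGreatest_le T
  have heq : lastO cs i T = lastO cs j T := by unfold ageO at h; omega
  apply hij
  rw [← hi, heq, hj]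

lemma ageO_succ (i : Fin 7) (T : ℕ) :
    ageO cs i (T+1) = if cs (T+1) = i then 0 else ageO cs i T + 1 := by
  unfold ageO lastO
  rw [Nat.findGreatest_succ]
  split
  · simp
  · have h := Nat.findGreatest_le (P := fun s => cs s = i) T
    omega

lemma ageO_zero (i : Fin 7) (T : ℕ) (h : cs T = i) : ageO cs i T = 0 := by
  unfold ageO lastO
  rw [Nat.findGreatest_eq h]
  omega

lemma key (hc : PinFeasible (![4, 6, 6, 8, 10, 10, 20] : Fin 7 → ℕ) cs) :
    ∀ n T, 19 ≤ T →
      surv n (ageO cs 0 T) (ageO cs 1 T) (ageO cs 2 T) (ageO cs 3 T)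
        (ageO cs 4 T) (ageO cs 5 T) (ageO cs 6 T) = true := by
  intro n
  induction n with
  | zero => intro T hT; rfl
  | succ n ih =>
    intro T hT
    have hT1 : 19 ≤ T + 1 := by omega
    have hbnd := fun i => ageO_lt hc i (T+1) hT1
    have hstep : ∀ i : Fin 7, ageO cs i (T+1) = if cs (T+1) = i then 0 else ageO cs i T + 1 :=
      fun i => ageO_succ i T
    have hs := ih (T+1) hT1
    have hb : ageO cs 0 (T+1) < 4 ∧ ageO cs 1 (T+1) < 6 ∧ ageO cs 2 (T+1) < 6 ∧
        ageO cs 3 (T+1) < 8 ∧ ageO cs 4 (T+1) < 10 ∧ ageO cs 5 (T+1) < 10 ∧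
        ageO cs 6 (T+1) < 20 :=
      ⟨hbnd 0, hbnd 1, hbnd 2, hbnd 3, hbnd 4, hbnd 5, hbnd 6⟩
    refine surv_step hb ?_ hs
    have h7 : ∀ x : Fin 7, x = 0 ∨ x = 1 ∨ x = 2 ∨ x = 3 ∨ x = 4 ∨ x = 5 ∨ x = 6 := by decide
    rcases h7 (cs (T+1)) with h|h|h|h|h|h|h
    · exact Or.inl ⟨by rw [hstep 0, if_pos h], by rw [hstep 1, if_neg (show ¬(cs (T+1) = 1) by rw [h]; decide)], by rw [hstep 2, if_neg (show ¬(cs (T+1) = 2) by rw [h]; decide)], by rw [hstep 3, if_neg (show ¬(cs (T+1) = 3) by rw [h]; decide)], by rw [hstep 4, if_neg (show ¬(cs (T+1) = 4) by rw [h]; decide)], by rw [hstep 5, if_neg (show ¬(cs (T+1) = 5) by rw [h]; decide)], by rw [hstep 6, if_neg (show ¬(cs (T+1) = 6) by rw [h]; decide)]⟩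
    · exact Or.inr (Or.inl ⟨by rw [hstep 0, if_neg (show ¬(cs (T+1) = 0) by rw [h]; decide)], by rw [hstep 1, if_pos h], by rw [hstep 2, if_neg (show ¬(cs (T+1) = 2) by rw [h]; decide)], by rw [hstep 3, if_neg (show ¬(cs (T+1) = 3) by rw [h]; decide)], by rw [hstep 4, if_neg (show ¬(cs (T+1) = 4) by rw [h]; decide)], by rw [hstep 5, if_neg (show ¬(cs (T+1) = 5) by rw [h]; decide)], by rw [hstep 6, if_neg (show ¬(cs (T+1) = 6) by rw [h]; decide)]⟩)
    · exact Or.inr (Or.inr (Or.inl ⟨by rw [hstep 0, if_neg (show ¬(cs (T+1) = 0) by rw [h]; decide)], by rw [hstep 1, if_neg (show ¬(cs (T+1) = 1) by rw [h]; decide)], by rw [hstep 2, if_pos h], by rw [hstep 3, if_neg (show ¬(cs (T+1) = 3) by rw [h]; decide)], by rw [hstep 4, if_neg (show ¬(cs (T+1) = 4) by rw [h]; decide)], by rw [hstep 5, if_neg (show ¬(cs (T+1) = 5) by rw [h]; decide)], by rw [hstep 6, if_neg (show ¬(cs (T+1) = 6) by rw [h]; decide)]⟩))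
    · exact Or.inr (Or.inr (Or.inr (Or.inl ⟨by rw [hstep 0, if_neg (show ¬(cs (T+1) = 0) by rw [h]; decide)], by rw [hstep 1, if_neg (show ¬(cs (T+1) = 1) by rw [h]; decide)], by rw [hstep 2, if_neg (show ¬(cs (T+1) = 2) by rw [h]; decide)], by rw [hstep 3, if_pos h], by rw [hstep 4, if_neg (show ¬(cs (T+1) = 4) by rw [h]; decide)], by rw [hstep 5, if_neg (show ¬(cs (T+1) = 5) by rw [h]; decide)], by rw [hstep 6, if_neg (show ¬(cs (T+1) = 6) by rw [h]; decide)]⟩)))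
    · exact Or.inr (Or.inr (Or.inr (Or.inr (Or.inl ⟨by rw [hstep 0, if_neg (show ¬(cs (T+1) = 0) by rw [h]; decide)], by rw [hstep 1, if_neg (show ¬(cs (T+1) = 1) by rw [h]; decide)], by rw [hstep 2, if_neg (show ¬(cs (T+1) = 2) by rw [h]; decide)], by rw [hstep 3, if_neg (show ¬(cs (T+1) = 3) by rw [h]; decide)], by rw [hstep 4, if_pos h], by rw [hstep 5, if_neg (show ¬(cs (T+1) = 5) by rw [h]; decide)], by rw [hstep 6, if_neg (show ¬(cs (T+1) = 6) by rw [h]; decide)]⟩))))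
    · exact Or.inr (Or.inr (Or.inr (Or.inr (Or.inr (Or.inl ⟨by rw [hstep 0, if_neg (show ¬(cs (T+1) = 0) by rw [h]; decide)], by rw [hstep 1, if_neg (show ¬(cs (T+1) = 1) by rw [h]; decide)], by rw [hstep 2, if_neg (show ¬(cs (T+1) = 2) by rw [h]; decide)], by rw [hstep 3, if_neg (show ¬(cs (T+1) = 3) by rw [h]; decide)], by rw [hstep 4, if_neg (show ¬(cs (T+1) = 4) by rw [h]; decide)], by rw [hstep 5, if_pos h], by rw [hstep 6, if_neg (show ¬(cs (T+1) = 6) by rw [h]; decide)]⟩)))))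
    · exact Or.inr (Or.inr (Or.inr (Or.inr (Or.inr (Or.inr ⟨by rw [hstep 0, if_neg (show ¬(cs (T+1) = 0) by rw [h]; decide)], by rw [hstep 1, if_neg (show ¬(cs (T+1) = 1) by rw [h]; decide)], by rw [hstep 2, if_neg (show ¬(cs (T+1) = 2) by rw [h]; decide)], by rw [hstep 3, if_neg (show ¬(cs (T+1) = 3) by rw [h]; decide)], by rw [hstep 4, if_neg (show ¬(cs (T+1) = 4) by rw [h]; decide)], by rw [hstep 5, if_neg (show ¬(cs (T+1) = 5) by rw [h]; decide)], by rw [hstep 6, if_pos h]⟩)))))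

end

lemma pin_infeasible : ¬ ∃ c : ℕ → Fin 7,
    PinFeasible (![4, 6, 6, 8, 10, 10, 20] : Fin 7 → ℕ) c := by
  rintro ⟨cs, hc⟩
  obtain ⟨T₀, hT1, hT2, hT3⟩ := hc 6 19
  have h19 : 19 ≤ T₀ := hT1
  have hk := key hc 24 T₀ h19
  have h6 : ageO cs 6 T₀ = 0 := ageO_zero 6 T₀ hT3
  rw [h6] at hk
  have hlt := fun i => ageO_lt hc i T₀ h19
  have hne : ∀ i j : Fin 7, i ≠ j → ageO cs i T₀ ≠ ageO cs j T₀ :=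
    fun i j hij => ageO_distinct hc T₀ h19 hij
  have hpos : ∀ i : Fin 7, i ≠ 6 → 0 < ageO cs i T₀ :=
    fun i hi => Nat.pos_of_ne_zero (h6 ▸ hne i 6 hi)
  have hfalse := surv_false (ageO cs 0 T₀) (ageO cs 1 T₀) (ageO cs 2 T₀) (ageO cs 3 T₀)
    (ageO cs 4 T₀) (ageO cs 5 T₀)
    (hlt 0) (hlt 1) (hlt 2) (hlt 3) (hlt 4) (hlt 5)
    (hpos 0 (by decide)) (hpos 1 (by decide)) (hpos 2 (by decide)) (hpos 3 (by decide))
    (hpos 4 (by decide)) (hpos 5 (by decide))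
    (hne 0 1 (by decide)) (hne 0 2 (by decide)) (hne 0 3 (by decide)) (hne 0 4 (by decide))
    (hne 0 5 (by decide)) (hne 1 2 (by decide)) (hne 1 3 (by decide)) (hne 1 4 (by decide))
    (hne 1 5 (by decide)) (hne 2 3 (by decide)) (hne 2 4 (by decide)) (hne 2 5 (by decide))
    (hne 3 4 (by decide)) (hne 3 5 (by decide)) (hne 4 5 (by decide))
  rw [hfalse] at hk
  exact Bool.false_ne_true hk

end Stmt17Aux

/-- The windows-scheduling instance `(2, (2,3,3,4,5,5,10))` admits a feasible
schedule, the pinwheel instance `(4,6,6,8,10,10,20)` admits no feasible pinwheel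
schedule, and consequently the windows-scheduling instance admits no perfect
feasible schedule. -/
theorem stmt_17 :
    (∃ W : ℕ → Fin 2 → Fin 7,
      WSPFeasible (![2, 3, 3, 4, 5, 5, 10] : Fin 7 → ℕ) W) ∧
    (¬ ∃ c : ℕ → Fin 7,
      PinFeasible (![4, 6, 6, 8, 10, 10, 20] : Fin 7 → ℕ) c) ∧
    (¬ ∃ W : ℕ → Fin 2 → Fin 7,
      WSPFeasible (![2, 3, 3, 4, 5, 5, 10] : Fin 7 → ℕ) W ∧ WSPPerfect W) := by
  refine ⟨⟨Stmt17Aux.Wgood, Stmt17Aux.Wgood_feasible⟩, Stmt17Aux.pin_infeasible, ?_⟩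
  rintro ⟨W, hF, hP⟩
  apply Stmt17Aux.pin_infeasible
  refine ⟨fun s => W (s / 2) ⟨s % 2, Nat.mod_lt _ (by norm_num)⟩, ?_⟩
  intro i t
  obtain ⟨t0, k0, -, -, hbase⟩ := hF i 0
  obtain ⟨t', k, h1, h2, h3⟩ := hF i ((t + 1 - (k0 : ℕ)) / 2)
  have hk : k = k0 := hP k k0 t' t0 (h3.trans hbase.symm)
  subst hk
  have hab : 1 ≤ (![2, 3, 3, 4, 5, 5, 10] : Fin 7 → ℕ) i ∧
      (![4, 6, 6, 8, 10, 10, 20] : Fin 7 → ℕ) i = 2 * (![2, 3, 3, 4, 5, 5, 10] : Fin 7 → ℕ) i := by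
    fin_cases i <;> exact ⟨by norm_num, rfl⟩
  obtain ⟨hα1, hβ2⟩ := hab
  have hk : (k : ℕ) < 2 := k.isLt
  refine ⟨2 * t' + (k : ℕ), by omega, by omega, ?_⟩
  have e1 : (2 * t' + (k : ℕ)) / 2 = t' := by omega
  have e2 : (2 * t' + (k : ℕ)) % 2 = (k : ℕ) := by omega
  have e3 : ∀ (h : (2 * t' + (k : ℕ)) % 2 < 2),
      (⟨(2 * t' + (k : ℕ)) % 2, h⟩ : Fin 2) = k := fun h => Fin.ext e2
  show W ((2 * t' + (k : ℕ)) / 2) ⟨(2 * t' + (k : ℕ)) % 2, Nat.mod_lt _ (by norm_num)⟩ = i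
  rw [e1, e3]
  exact h3
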